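/- Let d be the largest real root of x³ − 2x² − x + 1 and e = d² − d − 1. Suppose (r₁, r₂, r₃) is a triple of real numbers such that the symmetric matrix U with rows (1/d, √e/d, √d/d), (√e/d, (e/d)·r₁, √(e/d)·r₂), (√d/d, √(e/d)·r₂, r₃) satisfies U² = I. Then (r₁, r₂, r₃) equals either (d² − 4d + 3, d² − 3d + 2, d² − 3d + 1) or (−d² + 2d + 1, −d² + d + 2, −d² + d + 3). -/

import Mathlib

/-!
Since `d` is the largest root of `x³ - 2x² - x + 1`, which changes sign on `[2, 3]`, we have
`d > 2`, so `e > 0` and the square roots in `U` are of positive numbers. Clearing them, the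
entries `(0,1)`, `(0,2)` and `(1,1)` of `U * U = 1` become `1 + e r₁ + d r₂ = 0`,
`1 + e r₂ + d r₃ = 0` and `e + e² r₁² + e d r₂² = d²`. Eliminating `r₂` leaves a quadratic in
`r₁` whose two roots, modulo the cubic, are the claimed values; the two linear equations then
determine `r₂` and `r₃`.
-/

lemma exists_root_gt_two : ∃ x : ℝ, 2 < x ∧ x ^ 3 - 2 * x ^ 2 - x + 1 = 0 := by
  have hcont : ContinuousOn (fun x : ℝ => x ^ 3 - 2 * x ^ 2 - x + 1) (Set.Icc 2 3) := by
    fun_prop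
  obtain ⟨x, hx, hfx⟩ := intermediate_value_Ioo (by norm_num) hcont (by norm_num : (0 : ℝ) ∈ _)
  exact ⟨x, hx.1, hfx⟩

lemma two_lt_of_forall_root_le {d : ℝ} (hmax : ∀ x : ℝ, x ^ 3 - 2 * x ^ 2 - x + 1 = 0 → x ≤ d) :
    2 < d := by
  obtain ⟨x, hx, hroot⟩ := exists_root_gt_two
  exact hx.trans_le (hmax x hroot)

noncomputable def connectionMatrix (d e r₁ r₂ r₃ : ℝ) : Matrix (Fin 3) (Fin 3) ℝ :=
  Matrix.of
    ![![1 / d, Real.sqrt e / d, Real.sqrt d / d],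
      ![Real.sqrt e / d, (e / d) * r₁, Real.sqrt (e / d) * r₂],
      ![Real.sqrt d / d, Real.sqrt (e / d) * r₂, r₃]]

lemma sqrt_mul_sqrt_div_self {d : ℝ} (hd : 0 < d) (e : ℝ) :
    Real.sqrt d * Real.sqrt (e / d) = Real.sqrt e := by
  rw [← Real.sqrt_mul hd.le, mul_div_cancel₀ e hd.ne']

section Orthogonality

variable {d e r₁ r₂ r₃ : ℝ} (hd : 0 < d)
  (hinv : connectionMatrix d e r₁ r₂ r₃ * connectionMatrix d e r₁ r₂ r₃ = 1)
include hd hinv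

lemma first_orthogonality_of_mul_self_eq_one (he : 0 < e) : 1 + e * r₁ + d * r₂ = 0 := by
  have h := congrFun (congrFun hinv 0) 1
  simp only [connectionMatrix, Matrix.mul_apply, Fin.sum_univ_three, Matrix.of_apply,
    Matrix.cons_val, Matrix.one_apply, Fin.reduceEq, if_false] at h
  have key : Real.sqrt e * (1 + e * r₁ + d * r₂) = 0 := by
    field_simp at h
    linear_combination h - d * r₂ * sqrt_mul_sqrt_div_self hd e
  exact (mul_eq_zero.mp key).resolve_left (Real.sqrt_pos.mpr he).ne'

lemma second_orthogonality_of_mul_self_eq_one (he : 0 ≤ e) : 1 + e * r₂ + d * r₃ = 0 := by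
  have h := congrFun (congrFun hinv 0) 2
  simp only [connectionMatrix, Matrix.mul_apply, Fin.sum_univ_three, Matrix.of_apply,
    Matrix.cons_val, Matrix.one_apply, Fin.reduceEq, if_false] at h
  have key : d * (1 + e * r₂ + d * r₃) = 0 := by
    field_simp at h
    linear_combination Real.sqrt d * h - (1 + d * r₃) * Real.sq_sqrt hd.le
      - d * r₂ * Real.sqrt e * sqrt_mul_sqrt_div_self hd e - d * r₂ * Real.sq_sqrt he
  exact (mul_eq_zero.mp key).resolve_left hd.ne'

lemma second_row_norm_of_mul_self_eq_one (he : 0 ≤ e) :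
    e + e ^ 2 * r₁ ^ 2 + e * d * r₂ ^ 2 = d ^ 2 := by
  have h := congrFun (congrFun hinv 1) 1
  simp only [connectionMatrix, Matrix.mul_apply, Fin.sum_univ_three, Matrix.of_apply,
    Matrix.cons_val, Matrix.one_apply, if_true] at h
  field_simp at h
  rw [Real.sq_sqrt he, Real.sq_sqrt (div_nonneg he hd.le)] at h
  field_simp at h
  linear_combination h

end Orthogonality

section Solution

variable {d e r₁ r₂ r₃ : ℝ} (hroot : d ^ 3 - 2 * d ^ 2 - d + 1 = 0) (hd : 2 < d)
  (he : e = d ^ 2 - d - 1)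
include hroot hd he

lemma r₁_eq_of_orthogonality_of_norm (h₁ : 1 + e * r₁ + d * r₂ = 0)
    (h₃ : e + e ^ 2 * r₁ ^ 2 + e * d * r₂ ^ 2 = d ^ 2) :
    r₁ = d ^ 2 - 4 * d + 3 ∨ r₁ = -d ^ 2 + 2 * d + 1 := by
  have hquad : e ^ 2 * (d + e) * r₁ ^ 2 + 2 * e ^ 2 * r₁ + (d * e + e - d ^ 3) = 0 := by
    linear_combination d * h₃ - e * (d * r₂ - 1 - e * r₁) * h₁
  -- the two sides differ by a multiple of the cubic
  have hfactor :
      e ^ 2 * (d + e) * ((r₁ - (d ^ 2 - 4 * d + 3)) * (r₁ - (-d ^ 2 + 2 * d + 1))) = 0 := by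
    subst he
    linear_combination hquad + (2 * (d ^ 2 - d - 1) ^ 2 * r₁
      + (-2 - 8 * d + 16 * d ^ 3 - 5 * d ^ 4 - 9 * d ^ 5 + 6 * d ^ 6 - d ^ 7)) * hroot
  have he0 : 0 < e := by rw [he]; nlinarith
  have hde : e ^ 2 * (d + e) ≠ 0 := by positivity
  rcases mul_eq_zero.mp ((mul_eq_zero.mp hfactor).resolve_left hde) with h | h
  · exact .inl (sub_eq_zero.mp h)
  · exact .inr (sub_eq_zero.mp h)

lemma eq_of_orthogonality_of_norm (h₁ : 1 + e * r₁ + d * r₂ = 0) (h₂ : 1 + e * r₂ + d * r₃ = 0)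
    (h₃ : e + e ^ 2 * r₁ ^ 2 + e * d * r₂ ^ 2 = d ^ 2) :
    (r₁, r₂, r₃) = (d ^ 2 - 4 * d + 3, d ^ 2 - 3 * d + 2, d ^ 2 - 3 * d + 1) ∨
    (r₁, r₂, r₃) = (-d ^ 2 + 2 * d + 1, -d ^ 2 + d + 2, -d ^ 2 + d + 3) := by
  have hd0 : d ≠ 0 := by positivity
  rcases r₁_eq_of_orthogonality_of_norm hroot hd he h₁ h₃ with hr₁ | hr₁
  · have hr₂ : r₂ = d ^ 2 - 3 * d + 2 := mul_left_cancel₀ hd0 <| by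
      linear_combination h₁ - e * hr₁ + (2 - d) * hroot - (d ^ 2 - 4 * d + 3) * he
    have hr₃ : r₃ = d ^ 2 - 3 * d + 1 := mul_left_cancel₀ hd0 <| by
      linear_combination h₂ - e * hr₂ + (1 - d) * hroot - (d ^ 2 - 3 * d + 2) * he
    exact .inl (by rw [hr₁, hr₂, hr₃])
  · have hr₂ : r₂ = -d ^ 2 + d + 2 := mul_left_cancel₀ hd0 <| by
      linear_combination h₁ - e * hr₁ + d * hroot - (-d ^ 2 + 2 * d + 1) * he
    have hr₃ : r₃ = -d ^ 2 + d + 3 := mul_left_cancel₀ hd0 <| by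
      linear_combination h₂ - e * hr₂ + (d + 1) * hroot - (-d ^ 2 + d + 2) * he
    exact .inr (by rw [hr₁, hr₂, hr₃])

end Solution

theorem stmt_12 (d e r₁ r₂ r₃ : ℝ)
    (hroot : d ^ 3 - 2 * d ^ 2 - d + 1 = 0)
    (hmax : ∀ x : ℝ, x ^ 3 - 2 * x ^ 2 - x + 1 = 0 → x ≤ d)
    (he : e = d ^ 2 - d - 1)
    (U : Matrix (Fin 3) (Fin 3) ℝ)
    (hU : U = Matrix.of
      ![![1 / d, Real.sqrt e / d, Real.sqrt d / d],
        ![Real.sqrt e / d, (e / d) * r₁, Real.sqrt (e / d) * r₂],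
        ![Real.sqrt d / d, Real.sqrt (e / d) * r₂, r₃]])
    (hinv : U * U = 1) :
    (r₁, r₂, r₃) = (d ^ 2 - 4 * d + 3, d ^ 2 - 3 * d + 2, d ^ 2 - 3 * d + 1) ∨
    (r₁, r₂, r₃) = (-d ^ 2 + 2 * d + 1, -d ^ 2 + d + 2, -d ^ 2 + d + 3) := by
  have hd : 2 < d := two_lt_of_forall_root_le hmax
  have hd0 : 0 < d := by linarith
  have he0 : 0 < e := by rw [he]; nlinarith
  subst hU
  have h₁ := first_orthogonality_of_mul_self_eq_one hd0 hinv he0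
  have h₂ := second_orthogonality_of_mul_self_eq_one hd0 hinv he0.le
  have h₃ := second_row_norm_of_mul_self_eq_one hd0 hinv he0.le
  exact eq_of_orthogonality_of_norm hroot hd he h₁ h₂ h₃
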